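/- Coincidence of the G-norm and the Lip-norm of top order: for all real Banach spaces V₁, V₂, every integer m ≥ 1, every q ∈ [0,∞) and every φ ∈ C^m(V₁,V₂), one has ‖φ‖_{G^m_q(V₁,V₂)} = ‖φ‖_{Lip^m_q(V₁,V₂)} (an equality in [0,∞]). Equivalently, sup_{v∈V₁} ‖φ^{(m)}(v)‖/(1+‖v‖)^q equals the weighted Lipschitz constant sup_{v≠w} ‖φ^{(m−1)}(v) − φ^{(m−1)}(w)‖ / ((1+max(‖v‖,‖w‖))^q ‖v−w‖). -/

import Mathlib

open scoped ENNReal NNReal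

/-- The weighted norm `‖φ‖_{G^n_q} ∈ [0,∞]`. -/
noncomputable def Gnorm {V₁ V₂ : Type*} [NormedAddCommGroup V₁] [NormedSpace ℝ V₁]
    [NormedAddCommGroup V₂] [NormedSpace ℝ V₂] (n : ℕ) (q : ℝ) (φ : V₁ → V₂) : ℝ≥0∞ :=
  (∑ i ∈ Finset.range n, (‖iteratedFDeriv ℝ i φ 0‖₊ : ℝ≥0∞))
    + ⨆ v : V₁, (‖iteratedFDeriv ℝ n φ v‖₊ : ℝ≥0∞) / ENNReal.ofReal ((1 + ‖v‖) ^ q)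

/-- The weighted Lipschitz norm `‖φ‖_{Lip^{n+1}_q} ∈ [0,∞]` (so `‖φ‖_{Lip^m_q}` is
`LipNorm (m−1) q φ`). -/
noncomputable def LipNorm {V₁ V₂ : Type*} [NormedAddCommGroup V₁] [NormedSpace ℝ V₁]
    [NormedAddCommGroup V₂] [NormedSpace ℝ V₂] (n : ℕ) (q : ℝ) (φ : V₁ → V₂) : ℝ≥0∞ :=
  (∑ i ∈ Finset.range (n + 1), (‖iteratedFDeriv ℝ i φ 0‖₊ : ℝ≥0∞))
    + ⨆ (v : V₁) (w : V₁) (_ : v ≠ w),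
        (‖iteratedFDeriv ℝ n φ v - iteratedFDeriv ℝ n φ w‖₊ : ℝ≥0∞) /
          ENNReal.ofReal ((1 + max ‖v‖ ‖w‖) ^ q * ‖v - w‖)

/-!
Both suprema are the best constant `C` in a pointwise bound, so it suffices to show that, for
`f = φ^{(m-1)}` and every finite `C`, the bound `‖f' x‖ ≤ C (1 + ‖x‖)^q` holds everywhere iff
`‖f v - f w‖ ≤ C (1 + max ‖v‖ ‖w‖)^q ‖v - w‖` does. One direction is the mean value inequality
on the ball of radius `max ‖v‖ ‖w‖`, which is convex and contains `v` and `w`; the other bounds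
`‖f' v‖` by the Lipschitz constant of `f` on the ball of radius `ε` around `v` and lets `ε → 0`.
-/

lemma nnnorm_div_ofReal_le_coe_iff {E : Type*} [SeminormedAddCommGroup E] (a : E) {b : ℝ}
    (hb : 0 < b) (C : ℝ≥0) : (‖a‖₊ : ℝ≥0∞) / ENNReal.ofReal b ≤ C ↔ ‖a‖ ≤ C * b := by
  rw [ENNReal.div_le_iff (ENNReal.ofReal_pos.mpr hb).ne' ENNReal.ofReal_ne_top,
    ← enorm_eq_nnnorm, ← ofReal_norm, ← ENNReal.ofReal_coe_nnreal,
    ← ENNReal.ofReal_mul C.coe_nonneg, ENNReal.ofReal_le_ofReal_iff (by positivity)]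

section WeightedBounds

variable {E F : Type*} [NormedAddCommGroup E] [NormedAddCommGroup F]

noncomputable def weightedSupNorm (q : ℝ) (g : E → F) : ℝ≥0∞ :=
  ⨆ v : E, (‖g v‖₊ : ℝ≥0∞) / ENNReal.ofReal ((1 + ‖v‖) ^ q)

noncomputable def weightedLipConst (q : ℝ) (f : E → F) : ℝ≥0∞ :=
  ⨆ (v : E) (w : E) (_ : v ≠ w),
    (‖f v - f w‖₊ : ℝ≥0∞) / ENNReal.ofReal ((1 + max ‖v‖ ‖w‖) ^ q * ‖v - w‖)

lemma weightedSupNorm_le_coe_iff (q : ℝ) (g : E → F) (C : ℝ≥0) :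
    weightedSupNorm q g ≤ C ↔ ∀ v, ‖g v‖ ≤ C * (1 + ‖v‖) ^ q := by
  refine iSup_le_iff.trans (forall_congr' fun v => ?_)
  exact nnnorm_div_ofReal_le_coe_iff _ (by positivity) C

lemma weightedLipConst_le_coe_iff (q : ℝ) (f : E → F) (C : ℝ≥0) :
    weightedLipConst q f ≤ C ↔ ∀ v w, ‖f v - f w‖ ≤ C * (1 + max ‖v‖ ‖w‖) ^ q * ‖v - w‖ := by
  simp only [weightedLipConst, iSup_le_iff]
  refine forall₂_congr fun v w => ?_
  rcases eq_or_ne v w with rfl | hvw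
  · simp
  · have hpos : 0 < ‖v - w‖ := norm_pos_iff.mpr (sub_ne_zero.mpr hvw)
    rw [mul_assoc]
    simpa [hvw] using nnnorm_div_ofReal_le_coe_iff (f v - f w) (by positivity) C

variable [NormedSpace ℝ E] [NormedSpace ℝ F] {q : ℝ} {C : ℝ≥0} {f : E → F}

lemma norm_sub_le_of_norm_fderiv_le (hq : 0 ≤ q) (hf : Differentiable ℝ f)
    (h : ∀ x, ‖fderiv ℝ f x‖ ≤ C * (1 + ‖x‖) ^ q) (v w : E) :
    ‖f v - f w‖ ≤ C * (1 + max ‖v‖ ‖w‖) ^ q * ‖v - w‖ := by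
  have hball : ∀ x ∈ Metric.closedBall (0 : E) (max ‖v‖ ‖w‖),
      ‖fderiv ℝ f x‖ ≤ C * (1 + max ‖v‖ ‖w‖) ^ q := by
    intro x hx
    have hx : ‖x‖ ≤ max ‖v‖ ‖w‖ := mem_closedBall_zero_iff.mp hx
    exact (h x).trans (by gcongr)
  exact (convex_closedBall _ _).norm_image_sub_le_of_norm_fderiv_le (fun x _ => hf x) hball
    (mem_closedBall_zero_iff.mpr (le_max_right _ _))
    (mem_closedBall_zero_iff.mpr (le_max_left _ _))

lemma norm_fderiv_le_of_norm_sub_le (hq : 0 ≤ q) (hf : Differentiable ℝ f)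
    (h : ∀ v w, ‖f v - f w‖ ≤ C * (1 + max ‖v‖ ‖w‖) ^ q * ‖v - w‖) (v : E) :
    ‖fderiv ℝ f v‖ ≤ C * (1 + ‖v‖) ^ q := by
  have hε : ∀ ε > 0, ‖fderiv ℝ f v‖ ≤ C * (1 + (‖v‖ + ε)) ^ q := by
    intro ε hε
    refine (hf v).hasFDerivAt.le_of_lip' (by positivity) ?_
    filter_upwards [Metric.ball_mem_nhds v hε] with w hw
    have hw : ‖w‖ ≤ ‖v‖ + ε :=
      (norm_le_norm_add_norm_sub' w v).trans (by linarith [mem_ball_iff_norm.mp hw])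
    refine (h w v).trans ?_
    gcongr
    exact max_le hw (by linarith)
  have hcont : ContinuousAt (fun ε : ℝ => C * (1 + (‖v‖ + ε)) ^ q) 0 :=
    continuousAt_const.mul
      ((continuousAt_const.add (continuousAt_const.add continuousAt_id)).rpow_const (Or.inr hq))
  refine ge_of_tendsto (by simpa using hcont.continuousWithinAt.tendsto (s := Set.Ioi 0)) ?_
  exact eventually_nhdsWithin_of_forall hε

theorem weightedSupNorm_fderiv_eq_weightedLipConst (hq : 0 ≤ q) (hf : Differentiable ℝ f) :
    weightedSupNorm q (fderiv ℝ f) = weightedLipConst q f := by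
  refine le_antisymm (le_of_forall_ge fun c hc => ?_) (le_of_forall_ge fun c hc => ?_)
  all_goals induction c using ENNReal.recTopCoe with
    | top => exact le_top
    | coe C => ?_
  · rw [weightedSupNorm_le_coe_iff]
    rw [weightedLipConst_le_coe_iff] at hc
    exact norm_fderiv_le_of_norm_sub_le hq hf hc
  · rw [weightedLipConst_le_coe_iff]
    rw [weightedSupNorm_le_coe_iff] at hc
    exact norm_sub_le_of_norm_fderiv_le hq hf hc

end WeightedBounds

theorem Gnorm_eq_LipNorm_general {V₁ V₂ : Type*}
    [NormedAddCommGroup V₁] [NormedSpace ℝ V₁]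
    [NormedAddCommGroup V₂] [NormedSpace ℝ V₂]
    (m : ℕ) (hm : 1 ≤ m) (q : ℝ) (hq : 0 ≤ q)
    (φ : V₁ → V₂) (hφ : ContDiff ℝ m φ) :
    Gnorm m q φ = LipNorm (m - 1) q φ ∧
      (⨆ v : V₁, (‖iteratedFDeriv ℝ m φ v‖₊ : ℝ≥0∞) / ENNReal.ofReal ((1 + ‖v‖) ^ q)) =
        ⨆ (v : V₁) (w : V₁) (_ : v ≠ w),
          (‖iteratedFDeriv ℝ (m - 1) φ v - iteratedFDeriv ℝ (m - 1) φ w‖₊ : ℝ≥0∞) /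
            ENNReal.ofReal ((1 + max ‖v‖ ‖w‖) ^ q * ‖v - w‖) := by
  obtain ⟨n, rfl⟩ : ∃ n, m = n + 1 := ⟨m - 1, (Nat.sub_add_cancel hm).symm⟩
  have hd : Differentiable ℝ (iteratedFDeriv ℝ n φ) :=
    hφ.differentiable_iteratedFDeriv (by exact_mod_cast n.lt_succ_self)
  have hsup : weightedSupNorm q (iteratedFDeriv ℝ (n + 1) φ) =
      weightedLipConst q (iteratedFDeriv ℝ n φ) := by
    rw [← weightedSupNorm_fderiv_eq_weightedLipConst hq hd]
    simp only [weightedSupNorm, ← enorm_eq_nnnorm, ← ofReal_norm, norm_fderiv_iteratedFDeriv]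
  exact ⟨congrArg (_ + ·) hsup, hsup⟩

/-- **Coincidence of the `G`-norm and the `Lip`-norm of top order**: for `m ≥ 1`, `q ≥ 0`
and `φ ∈ C^m(V₁,V₂)`, `‖φ‖_{G^m_q} = ‖φ‖_{Lip^m_q}`; equivalently, the weighted supremum of
`‖φ^{(m)}‖` coincides with the weighted Lipschitz constant of `φ^{(m−1)}`. -/
theorem Gnorm_eq_LipNorm {V₁ V₂ : Type*}
    [NormedAddCommGroup V₁] [NormedSpace ℝ V₁] [CompleteSpace V₁]
    [NormedAddCommGroup V₂] [NormedSpace ℝ V₂] [CompleteSpace V₂]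
    (m : ℕ) (hm : 1 ≤ m) (q : ℝ) (hq : 0 ≤ q)
    (φ : V₁ → V₂) (hφ : ContDiff ℝ m φ) :
    Gnorm m q φ = LipNorm (m - 1) q φ ∧
      (⨆ v : V₁, (‖iteratedFDeriv ℝ m φ v‖₊ : ℝ≥0∞) / ENNReal.ofReal ((1 + ‖v‖) ^ q)) =
        ⨆ (v : V₁) (w : V₁) (_ : v ≠ w),
          (‖iteratedFDeriv ℝ (m - 1) φ v - iteratedFDeriv ℝ (m - 1) φ w‖₊ : ℝ≥0∞) /
            ENNReal.ofReal ((1 + max ‖v‖ ‖w‖) ^ q * ‖v - w‖) :=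
  Gnorm_eq_LipNorm_general m hm q hq φ hφ
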